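/- For all n ≥ 0, 3·∑_{k=0}^n C(n,k) J_k J_{n-k} = 2^n J_n + 2·(−1)^n J_n, where J_n are the Jacobsthal numbers. -/
import Mathlib


/-- The Jacobsthal numbers: `J 0 = 0`, `J 1 = 1`, `J (n+2) = J (n+1) + 2 * J n`. -/
def jacobsthal : ℕ → ℤ
  | 0 => 0
  | 1 => 1
  | n + 2 => jacobsthal (n + 1) + 2 * jacobsthal n

lemma jac3 : ∀ n : ℕ, 3 * jacobsthal n = 2 ^ n - (-1) ^ n
  | 0 => by simp [jacobsthal]
  | 1 => by norm_num [jacobsthal]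
  | n + 2 => by
    have h1 := jac3 (n + 1)
    have h2 := jac3 n
    show 3 * (jacobsthal (n + 1) + 2 * jacobsthal n) = _
    linear_combination h1 + 2 * h2

theorem binomial_conv_jacobsthal (n : ℕ) :
    3 * ∑ k ∈ Finset.range (n + 1),
        (n.choose k : ℤ) * jacobsthal k * jacobsthal (n - k) =
      2 ^ n * jacobsthal n + 2 * (-1) ^ n * jacobsthal n := by
  have key : (9 : ℤ) * ∑ k ∈ Finset.range (n + 1),
      (n.choose k : ℤ) * jacobsthal k * jacobsthal (n - k)
      = 4 ^ n + (-2) ^ n - 2 := by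
    rw [Finset.mul_sum]
    have step : ∀ k ∈ Finset.range (n + 1),
        9 * ((n.choose k : ℤ) * jacobsthal k * jacobsthal (n - k)) =
        (2:ℤ) ^ k * 2 ^ (n - k) * n.choose k
          - 2 ^ k * (-1) ^ (n - k) * n.choose k
          - (-1) ^ k * 2 ^ (n - k) * n.choose k
          + (-1) ^ k * (-1) ^ (n - k) * n.choose k := by
      intro k _
      have h1 := jac3 k
      have h2 := jac3 (n - k)
      linear_combination (2 ^ (n-k) - (-1)^(n-k)) * (n.choose k : ℤ) * h1
        + 3 * jacobsthal k * (n.choose k : ℤ) * h2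
    rw [Finset.sum_congr rfl step]
    rw [Finset.sum_add_distrib, Finset.sum_sub_distrib, Finset.sum_sub_distrib,
      ← add_pow, ← add_pow, ← add_pow, ← add_pow]
    ring_nf
  have goal3 : (3:ℤ) * (3 * ∑ k ∈ Finset.range (n + 1),
      (n.choose k : ℤ) * jacobsthal k * jacobsthal (n - k))
      = 3 * (2 ^ n * jacobsthal n + 2 * (-1) ^ n * jacobsthal n) := by
    have h := jac3 n
    have e1 : ((-1:ℤ)) ^ n * (-1) ^ n = 1 := by rw [← mul_pow]; norm_num
    have e2 : (2:ℤ) ^ n * 2 ^ n = 4 ^ n := by rw [← mul_pow]; norm_num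
    have e3 : ((-1:ℤ)) ^ n * 2 ^ n = (-2) ^ n := by rw [← mul_pow]; norm_num
    linear_combination key - (2 ^ n + 2 * (-1) ^ n) * h - e2 - e3 + 2 * e1
  exact mul_left_cancel₀ (by norm_num : (3:ℤ) ≠ 0) goal3
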